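/- Let f be Lipschitz on ℝⁿ with L_f = {ξ ∈ ℝⁿ : ‖∇_ξ f‖_∞ ≤ 1} a convex body, and let H̄_f = h_{L_f} be the support function of L_f. Then H̄_f(∇f(x)) ≤ 1 for almost every x ∈ ℝⁿ. -/
import Mathlib


open MeasureTheory Real
open scoped RealInnerProductSpace

noncomputable section

/-- `‖∇_ξ f‖_∞ = ess sup_x |⟨∇f(x), ξ⟩|`. -/
def dirDerivLinftyNorm (n : ℕ) (f : EuclideanSpace ℝ (Fin n) → ℝ)
    (ξ : EuclideanSpace ℝ (Fin n)) : ℝ :=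
  essSup (fun x => |⟪gradient f x, ξ⟫|) volume

private lemma gradient_norm_le {n : ℕ} {f : EuclideanSpace ℝ (Fin n) → ℝ}
    {K : NNReal} (hf : LipschitzWith K f) (x : EuclideanSpace ℝ (Fin n)) :
    ‖gradient f x‖ ≤ K := by
  rw [gradient, LinearIsometryEquiv.norm_map]
  exact norm_fderiv_le_of_lipschitz ℝ hf

private lemma key_ae {n : ℕ} {f : EuclideanSpace ℝ (Fin n) → ℝ}
    {K : NNReal} (hf : LipschitzWith K f) (ξ : EuclideanSpace ℝ (Fin n))
    (hξ : dirDerivLinftyNorm n f ξ ≤ 1) :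
    ∀ᵐ x : EuclideanSpace ℝ (Fin n), ⟪gradient f x, ξ⟫ ≤ 1 := by
  have hbound : ∀ x : EuclideanSpace ℝ (Fin n), |⟪gradient f x, ξ⟫| ≤ (K : ℝ) * ‖ξ‖ := by
    intro x
    calc |⟪gradient f x, ξ⟫| ≤ ‖gradient f x‖ * ‖ξ‖ := abs_real_inner_le_norm _ _
    _ ≤ (K : ℝ) * ‖ξ‖ := by gcongr; exact gradient_norm_le hf x
  have hb : Filter.IsBoundedUnder (· ≤ ·) (MeasureTheory.ae volume)
      (fun x : EuclideanSpace ℝ (Fin n) => |⟪gradient f x, ξ⟫|) :=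
    Filter.isBoundedUnder_of ⟨(K : ℝ) * ‖ξ‖, hbound⟩
  filter_upwards [ae_le_essSup hb] with x hx
  calc ⟪gradient f x, ξ⟫ ≤ |⟪gradient f x, ξ⟫| := le_abs_self _
  _ ≤ dirDerivLinftyNorm n f ξ := hx
  _ ≤ 1 := hξ

/-- If `f` is Lipschitz and `L_f = {ξ : ‖∇_ξ f‖_∞ ≤ 1}` is a convex body, then the support
function `h_{L_f}` satisfies `h_{L_f}(∇f(x)) ≤ 1` for almost every `x`. -/
theorem support_of_gradient_le_one (n : ℕ) (f : EuclideanSpace ℝ (Fin n) → ℝ)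
    (K : NNReal) (hf : LipschitzWith K f)
    (hbody : IsCompact {ξ : EuclideanSpace ℝ (Fin n) | dirDerivLinftyNorm n f ξ ≤ 1})
    (hint : ((0 : EuclideanSpace ℝ (Fin n)) ∈
      interior {ξ : EuclideanSpace ℝ (Fin n) | dirDerivLinftyNorm n f ξ ≤ 1})) :
    ∀ᵐ x : EuclideanSpace ℝ (Fin n),
      sSup {t : ℝ | ∃ ξ ∈ {ξ : EuclideanSpace ℝ (Fin n) | dirDerivLinftyNorm n f ξ ≤ 1},
          t = ⟪gradient f x, ξ⟫} ≤ 1 := by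
  classical
  have h0L : (0 : EuclideanSpace ℝ (Fin n)) ∈
      {ξ : EuclideanSpace ℝ (Fin n) | dirDerivLinftyNorm n f ξ ≤ 1} := interior_subset hint
  haveI : Nonempty ({ξ : EuclideanSpace ℝ (Fin n) | dirDerivLinftyNorm n f ξ ≤ 1}) := ⟨⟨0, h0L⟩⟩
  obtain ⟨u, hu⟩ :=
    TopologicalSpace.exists_dense_seq ({ξ : EuclideanSpace ℝ (Fin n) | dirDerivLinftyNorm n f ξ ≤ 1})
  have key2 : ∀ᵐ x : EuclideanSpace ℝ (Fin n),
      ∀ k : ℕ, ⟪gradient f x, (u k : EuclideanSpace ℝ (Fin n))⟫ ≤ 1 := by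
    rw [MeasureTheory.ae_all_iff]
    exact fun k => key_ae hf (u k) (u k).2
  filter_upwards [key2] with x hx
  apply Real.sSup_le _ zero_le_one
  rintro t ⟨ξ, hξ, rfl⟩
  have hclosed : IsClosed {η : ({ξ : EuclideanSpace ℝ (Fin n) | dirDerivLinftyNorm n f ξ ≤ 1}) |
      ⟪gradient f x, (η : EuclideanSpace ℝ (Fin n))⟫ ≤ 1} :=
    isClosed_le (continuous_const.inner continuous_subtype_val) continuous_const
  have hsub : closure (Set.range u) ⊆
      {η : ({ξ : EuclideanSpace ℝ (Fin n) | dirDerivLinftyNorm n f ξ ≤ 1}) |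
        ⟪gradient f x, (η : EuclideanSpace ℝ (Fin n))⟫ ≤ 1} := by
    apply closure_minimal _ hclosed
    rintro _ ⟨k, rfl⟩
    exact hx k
  exact hsub (hu.closure_range ▸ Set.mem_univ (⟨ξ, hξ⟩ :
    ({ξ : EuclideanSpace ℝ (Fin n) | dirDerivLinftyNorm n f ξ ≤ 1})))
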